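/- arXiv:2110.14653 — 5 statements merged into one kernel-verified Lean document; each statement's English description precedes it below -/
import Mathlib

section
/- For any two density operators ρ and σ on a finite-dimensional Hilbert space and any real n ≥ 1, |Tr(ρ^n) − Tr(σ^n)| ≤ n · ‖ρ − σ‖_1, where ‖·‖_1 denotes the trace norm. -/
open Matrix
open scoped ComplexOrder

/-- The square root of a positive semidefinite matrix, as `Matrix.PosSemidef.sqrt` was defined
in the older Mathlib (removed since). -/
noncomputable def posSemidefSqrt {m : Type*} [Fintype m] [DecidableEq m] {A : Matrix m m ℂ}
    (hA : A.PosSemidef) : Matrix m m ℂ :=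
  hA.1.eigenvectorUnitary.1 * diagonal ((↑) ∘ (Real.sqrt ·) ∘ hA.1.eigenvalues) *
    (star hA.1.eigenvectorUnitary : Matrix m m ℂ)

/-- Trace norm `‖A‖₁ = Tr √(AᴴA)`. -/
noncomputable def trNorm {m : Type*} [Fintype m] [DecidableEq m] (A : Matrix m m ℂ) : ℝ :=
  (posSemidefSqrt (Matrix.posSemidef_conjTranspose_mul_self A)).trace.re

/-- `Tr(A^r)` for real `r`, defined via the functional calculus:
for a Hermitian matrix it is the sum of the `r`-th powers (`Real.rpow`) of the
eigenvalues (with `0^r = 0` for `r > 0`). -/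
noncomputable def trRpow {m : Type*} [Fintype m] [DecidableEq m]
    (A : Matrix m m ℂ) (r : ℝ) : ℝ :=
  if h : A.IsHermitian then ∑ i, (h.eigenvalues i) ^ r else 0

/-!
Diagonalize `ρ = ∑ aᵢ |uᵢ⟩⟨uᵢ|`, `σ = ∑ bⱼ |vⱼ⟩⟨vⱼ|` and `ρ - σ = ∑ cₖ |wₖ⟩⟨wₖ|`. The overlaps
`Pᵢⱼ = |⟨uᵢ, vⱼ⟩|²` form a doubly stochastic matrix, and
`aᵢ - ∑ⱼ Pᵢⱼ bⱼ = ⟨uᵢ, (ρ - σ) uᵢ⟩ = ∑ₖ |⟨uᵢ, wₖ⟩|² cₖ`.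
Convexity of `x ↦ x ^ n` gives `aᵢ ^ n - bⱼ ^ n ≤ n aᵢ ^ (n - 1) (aᵢ - bⱼ)`, and `aᵢ ≤ 1` because
`Tr ρ = 1`. Averaging over `j` with the weights `Pᵢⱼ` and summing over `i`,
`Tr ρ ^ n - Tr σ ^ n ≤ n ∑ᵢ |⟨uᵢ, (ρ - σ) uᵢ⟩| ≤ n ∑ₖ |cₖ| = n ‖ρ - σ‖₁`,
the last inequality because the columns of `|⟨uᵢ, wₖ⟩|²` sum to one. Exchanging `ρ` and `σ` gives
the other half of the absolute value.
-/

open Finset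

theorem Real.rpow_sub_rpow_le_mul_rpow_sub_one_mul {p a b : ℝ} (hp : 1 ≤ p) (ha : 0 ≤ a)
    (hb : 0 ≤ b) : a ^ p - b ^ p ≤ p * a ^ (p - 1) * (a - b) := by
  obtain rfl | ha := ha.eq_or_lt
  · obtain rfl | hp := hp.eq_or_lt
    · simp
    · rw [zero_rpow (by linarith), zero_rpow (by linarith)]
      linarith [rpow_nonneg hb p]
  have h := one_add_mul_self_le_rpow_one_add (s := b / a - 1)
    (by linarith [div_nonneg hb ha.le]) hp
  rw [add_sub_cancel, div_rpow hb ha.le, le_div_iff₀ (rpow_pos_of_pos ha p)] at h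
  rw [rpow_sub_one ha.ne']
  have e : (1 + p * (b / a - 1)) * a ^ p = a ^ p + p * (a ^ p / a) * (b - a) := by
    field_simp
  linarith

theorem sum_rpow_sub_sum_rpow_le {ι : Type*} [Fintype ι] [DecidableEq ι] {P : Matrix ι ι ℝ}
    (hP : P ∈ doublyStochastic ℝ ι) {a b : ι → ℝ} (ha₀ : ∀ i, 0 ≤ a i) (ha₁ : ∀ i, a i ≤ 1)
    (hb : ∀ j, 0 ≤ b j) {p : ℝ} (hp : 1 ≤ p) :
    ∑ i, a i ^ p - ∑ j, b j ^ p ≤ p * ∑ i, |a i - (P *ᵥ b) i| := by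
  rw [mem_doublyStochastic_iff_sum] at hP
  obtain ⟨hP₀, hProw, hPcol⟩ := hP
  calc ∑ i, a i ^ p - ∑ j, b j ^ p = ∑ i, ∑ j, P i j * (a i ^ p - b j ^ p) := by
        simp_rw [mul_sub, sum_sub_distrib, ← sum_mul, hProw, one_mul]
        rw [sum_comm]
        simp_rw [← sum_mul, hPcol, one_mul]
    _ ≤ ∑ i, ∑ j, P i j * (p * a i ^ (p - 1) * (a i - b j)) := by
        gcongr with i _ j _
        · exact hP₀ i j
        · exact Real.rpow_sub_rpow_le_mul_rpow_sub_one_mul hp (ha₀ i) (hb j)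
    _ = ∑ i, p * a i ^ (p - 1) * (∑ j, P i j * a i - (P *ᵥ b) i) := by
        simp only [mulVec, dotProduct, ← sum_sub_distrib, mul_sum]
        congr! 2
        ring
    _ = ∑ i, p * a i ^ (p - 1) * (a i - (P *ᵥ b) i) := by
        simp_rw [← sum_mul, hProw, one_mul]
    _ ≤ ∑ i, p * |a i - (P *ᵥ b) i| := by
        refine sum_le_sum fun i _ => ?_
        have h₀ : 0 ≤ a i ^ (p - 1) := Real.rpow_nonneg (ha₀ i) _
        have h₁ : a i ^ (p - 1) ≤ 1 := Real.rpow_le_one (ha₀ i) (ha₁ i) (by linarith)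
        calc p * a i ^ (p - 1) * (a i - (P *ᵥ b) i)
            ≤ p * a i ^ (p - 1) * |a i - (P *ᵥ b) i| := by gcongr; exact le_abs_self _
          _ ≤ p * 1 * |a i - (P *ᵥ b) i| := by gcongr
          _ = p * |a i - (P *ᵥ b) i| := by rw [mul_one]
    _ = p * ∑ i, |a i - (P *ᵥ b) i| := (mul_sum ..).symm

theorem sum_abs_mulVec_le_of_mem_colStochastic {ι : Type*} [Fintype ι] [DecidableEq ι]
    {Q : Matrix ι ι ℝ} (hQ : Q ∈ colStochastic ℝ ι) (c : ι → ℝ) : ∑ i, |(Q *ᵥ c) i| ≤ ∑ k, |c k| :=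
  calc ∑ i, |(Q *ᵥ c) i| ≤ ∑ i, (Q *ᵥ fun k => |c k|) i := by
        gcongr with i
        refine (abs_sum_le_sum_abs _ _).trans_eq (sum_congr rfl fun k _ => ?_)
        rw [abs_mul, abs_of_nonneg (nonneg_of_mem_colStochastic hQ)]
    _ = ∑ k, |c k| := sum_mulVec_of_mem_colStochastic hQ

namespace Matrix

variable {n 𝕜 : Type*} [Fintype n] [DecidableEq n] [RCLike 𝕜]

theorem normSq_apply_mem_doublyStochastic {U : Matrix n n 𝕜} (hU : U ∈ unitaryGroup n 𝕜) :
    (of fun i j => ‖U i j‖ ^ 2) ∈ doublyStochastic ℝ n := by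
  simp only [mem_doublyStochastic_iff_sum, of_apply]
  refine ⟨fun i j => by positivity, fun i => ?_, fun j => ?_⟩
  · have h := congr_fun₂ (mem_unitaryGroup_iff.1 hU) i i
    simp only [mul_apply, star_apply, one_apply_eq, RCLike.star_def, RCLike.mul_conj] at h
    exact_mod_cast h
  · have h := congr_fun₂ (mem_unitaryGroup_iff'.1 hU) j j
    simp only [mul_apply, star_apply, one_apply_eq, RCLike.star_def, RCLike.conj_mul] at h
    exact_mod_cast h

theorem mul_diagonal_mul_star_apply_self (W : Matrix n n 𝕜) (f : n → ℝ) (i : n) :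
    (W * diagonal (RCLike.ofReal ∘ f : n → 𝕜) * star W) i i =
      ((∑ j, ‖W i j‖ ^ 2 * f j : ℝ) : 𝕜) := by
  rw [mul_apply]
  simp only [mul_diagonal, star_apply, RCLike.star_def, Function.comp_apply]
  push_cast
  refine sum_congr rfl fun j _ => ?_
  rw [← RCLike.mul_conj]
  ring

namespace IsHermitian

variable {A : Matrix n n 𝕜}

theorem star_mul_mul_apply_self (hA : A.IsHermitian) (N : Matrix n n 𝕜) (i : n) :
    (star N * A * N) i i =
      ((∑ j, ‖(star N * hA.eigenvectorUnitary) i j‖ ^ 2 * hA.eigenvalues j : ℝ) : 𝕜) := by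
  conv_lhs => rw [hA.spectral_theorem, Unitary.conjStarAlgAut_apply]
  rw [← mul_diagonal_mul_star_apply_self]
  simp only [star_mul, star_star, Matrix.mul_assoc]

theorem star_eigenvectorUnitary_mul_mul_apply_self (hA : A.IsHermitian) (i : n) :
    (star (hA.eigenvectorUnitary : Matrix n n 𝕜) * A * hA.eigenvectorUnitary) i i =
      hA.eigenvalues i := by
  rw [hA.star_mul_mul_apply_self, Unitary.coe_star_mul_self]
  simp [one_apply, apply_ite (‖·‖)]

theorem trace_cfc (hA : A.IsHermitian) (f : ℝ → ℝ) :
    (cfc f A).trace = ∑ i, (f (hA.eigenvalues i) : 𝕜) := by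
  rw [hA.cfc_eq, IsHermitian.cfc, Unitary.conjStarAlgAut_apply, trace_mul_cycle,
    Unitary.coe_star_mul_self, one_mul, trace_diagonal]
  rfl

end IsHermitian

theorem PosSemidef.eigenvalues_le_one_of_trace_eq_one {A : Matrix n n 𝕜} (hA : A.PosSemidef)
    (htr : A.trace = 1) (i : n) : hA.isHermitian.eigenvalues i ≤ 1 := by
  have hsum : ∑ j, hA.isHermitian.eigenvalues j = 1 := by
    have h := hA.isHermitian.trace_eq_sum_eigenvalues
    rw [htr] at h
    exact_mod_cast h.symm
  rw [← hsum]
  exact single_le_sum (fun j _ => hA.eigenvalues_nonneg j) (mem_univ i)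

end Matrix

section

variable {m : Type*} [Fintype m] [DecidableEq m]

theorem posSemidefSqrt_eq_cfc {A : Matrix m m ℂ} (hA : A.PosSemidef) :
    posSemidefSqrt hA = cfc Real.sqrt A := by
  rw [hA.isHermitian.cfc_eq]
  rfl

theorem trNorm_neg (A : Matrix m m ℂ) : trNorm (-A) = trNorm A := by
  simp only [trNorm, posSemidefSqrt_eq_cfc, conjTranspose_neg, neg_mul_neg]

theorem trNorm_eq_sum_abs_eigenvalues {A : Matrix m m ℂ} (hA : A.IsHermitian) :
    trNorm A = ∑ i, |hA.eigenvalues i| := by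
  have h : cfc Real.sqrt (Aᴴ * A) = cfc (fun x : ℝ => |x|) A := by
    simp_rw [hA.eq, ← sq, ← Real.sqrt_sq_eq_abs]
    exact (cfc_comp_pow _ _ _).symm
  rw [trNorm, posSemidefSqrt_eq_cfc, h, hA.trace_cfc]
  simp

theorem trRpow_of_isHermitian {A : Matrix m m ℂ} (hA : A.IsHermitian) (r : ℝ) :
    trRpow A r = ∑ i, hA.eigenvalues i ^ r :=
  dif_pos hA

theorem trRpow_sub_trRpow_le {ρ σ : Matrix m m ℂ} (hρ : ρ.PosSemidef) (hσ : σ.PosSemidef)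
    (htr : ρ.trace = 1) {p : ℝ} (hp : 1 ≤ p) :
    trRpow ρ p - trRpow σ p ≤ p * trNorm (ρ - σ) := by
  have hΔ : (ρ - σ).IsHermitian := hρ.isHermitian.sub hσ.isHermitian
  set U : Matrix m m ℂ := (hρ.isHermitian.eigenvectorUnitary : Matrix m m ℂ)
  have hU : star U ∈ unitaryGroup m ℂ := Unitary.star_mem hρ.isHermitian.eigenvectorUnitary.2
  set a := hρ.isHermitian.eigenvalues
  set b := hσ.isHermitian.eigenvalues
  set c := hΔ.eigenvalues
  set P := of fun i j => ‖(star U * hσ.isHermitian.eigenvectorUnitary) i j‖ ^ 2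
  set Q := of fun i k => ‖(star U * hΔ.eigenvectorUnitary) i k‖ ^ 2
  have hP : P ∈ doublyStochastic ℝ m :=
    normSq_apply_mem_doublyStochastic (mul_mem hU hσ.isHermitian.eigenvectorUnitary.2)
  have hQ : Q ∈ colStochastic ℝ m :=
    (mem_doublyStochastic_iff_mem_rowStochastic_and_mem_colStochastic.1
      (normSq_apply_mem_doublyStochastic (mul_mem hU hΔ.eigenvectorUnitary.2))).2
  have hdiag : ∀ i, a i - (P *ᵥ b) i = (Q *ᵥ c) i := by
    intro i
    have h := congr_fun₂ (show star U * (ρ - σ) * U = star U * ρ * U - star U * σ * U by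
      noncomm_ring) i i
    rw [Matrix.sub_apply, hρ.isHermitian.star_eigenvectorUnitary_mul_mul_apply_self,
      hσ.isHermitian.star_mul_mul_apply_self, hΔ.star_mul_mul_apply_self] at h
    exact_mod_cast h.symm
  rw [trRpow_of_isHermitian hρ.isHermitian, trRpow_of_isHermitian hσ.isHermitian,
    trNorm_eq_sum_abs_eigenvalues hΔ]
  calc ∑ i, a i ^ p - ∑ j, b j ^ p ≤ p * ∑ i, |a i - (P *ᵥ b) i| :=
        sum_rpow_sub_sum_rpow_le hP hρ.eigenvalues_nonneg
          (hρ.eigenvalues_le_one_of_trace_eq_one htr) hσ.eigenvalues_nonneg hp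
    _ = p * ∑ i, |(Q *ᵥ c) i| := by simp_rw [hdiag]
    _ ≤ p * ∑ k, |c k| :=
        mul_le_mul_of_nonneg_left (sum_abs_mulVec_le_of_mem_colStochastic hQ c) (by linarith)

end

/-- for density operators `ρ, σ` and real `n ≥ 1`,
`|Tr(ρ^n) − Tr(σ^n)| ≤ n ⬝ ‖ρ − σ‖₁`. -/
theorem abs_trace_rpow_sub_le
    (d : ℕ) (ρ σ : Matrix (Fin d) (Fin d) ℂ)
    (hρ : ρ.PosSemidef) (hσ : σ.PosSemidef)
    (htrρ : ρ.trace = 1) (htrσ : σ.trace = 1)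
    (n : ℝ) (hn : 1 ≤ n) :
    |trRpow ρ n - trRpow σ n| ≤ n * trNorm (ρ - σ) := by
  refine abs_sub_le_iff.2 ⟨trRpow_sub_trRpow_le hρ hσ htrρ hn, ?_⟩
  rw [← trNorm_neg, neg_sub]
  exact trRpow_sub_trRpow_le hσ hρ htrσ hn
end

section
/- For positive integers N (even), n with n ≤ N/2, and dimension d ≥ 1, the ratio of binomial coefficients C(N/2 + d − 1, N/2) / C(N/2 + n + d − 1, N/2 + n) is at least ((N/2 + 1)/(N/2 + n + 1))^{d−1}, which in turn is at least 1 − 2dn/N. -/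
/-- Key natural-number inequality: `(m+1)^e * C(m+n+e, e) ≤ (m+n+1)^e * C(m+e, e)`. -/
lemma choose_ratio_key (m n e : ℕ) :
    (m + 1) ^ e * (m + n + e).choose e ≤ (m + n + 1) ^ e * (m + e).choose e := by
  induction e with
  | zero => simp
  | succ e ih =>
    have key : (m + 1) * (m + n + e + 1) ≤ (m + n + 1) * (m + e + 1) := by nlinarith
    have h1 : (m + n + e + 1) * (m + n + e).choose e
        = (m + n + e + 1).choose (e + 1) * (e + 1) := Nat.add_one_mul_choose_eq _ _
    have h2 : (m + e + 1) * (m + e).choose e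
        = (m + e + 1).choose (e + 1) * (e + 1) := Nat.add_one_mul_choose_eq _ _
    have H : (m + 1) ^ (e + 1) * (m + n + e + 1).choose (e + 1) * (e + 1)
        ≤ (m + n + 1) ^ (e + 1) * (m + e + 1).choose (e + 1) * (e + 1) := by
      calc (m + 1) ^ (e + 1) * (m + n + e + 1).choose (e + 1) * (e + 1)
          = ((m + 1) * (m + n + e + 1)) * ((m + 1) ^ e * (m + n + e).choose e) := by
            rw [pow_succ]
            rw [show (m + 1) ^ e * (m + 1) * (m + n + e + 1).choose (e + 1) * (e + 1)
              = (m + 1) ^ e * (m + 1) * ((m + n + e + 1).choose (e + 1) * (e + 1)) by ring,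
              ← h1]
            ring
        _ ≤ ((m + n + 1) * (m + e + 1)) * ((m + n + 1) ^ e * (m + e).choose e) :=
            Nat.mul_le_mul key ih
        _ = (m + n + 1) ^ (e + 1) * (m + e + 1).choose (e + 1) * (e + 1) := by
            rw [pow_succ]
            rw [show (m + n + 1) ^ e * (m + n + 1) * (m + e + 1).choose (e + 1) * (e + 1)
              = (m + n + 1) ^ e * (m + n + 1) * ((m + e + 1).choose (e + 1) * (e + 1)) by ring,
              ← h2]
            ring
    exact Nat.le_of_mul_le_mul_right H (Nat.succ_pos e)

/-- for `N` even and positive, `1 ≤ n ≤ N/2`, and dimension `d ≥ 1`, the ratio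
`C(N/2 + d − 1, N/2) / C(N/2 + n + d − 1, N/2 + n)` of dimensions of symmetric subspaces
is at least `((N/2 + 1)/(N/2 + n + 1))^(d−1)`, which is at least `1 − 2dn/N`. -/
theorem choose_ratio_bounds (N n d : ℕ) (hN : 2 ∣ N) (hNpos : 0 < N)
    (hn : 0 < n) (hnN : n ≤ N / 2) (hd : 1 ≤ d) :
    ((((N / 2 : ℕ) : ℝ) + 1) / (((N / 2 : ℕ) : ℝ) + n + 1)) ^ (d - 1)
        ≤ ((N / 2 + d - 1).choose (N / 2) : ℝ) / ((N / 2 + n + d - 1).choose (N / 2 + n))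
      ∧ 1 - 2 * (d : ℝ) * n / N
        ≤ ((((N / 2 : ℕ) : ℝ) + 1) / (((N / 2 : ℕ) : ℝ) + n + 1)) ^ (d - 1) := by
  set m := N / 2 with hm
  set e := d - 1 with he
  have hmpos : 0 < m := lt_of_lt_of_le hn hnN
  have hd' : d = e + 1 := by omega
  have hidx1 : m + d - 1 = m + e := by omega
  have hidx2 : m + n + d - 1 = m + n + e := by omega
  have hc1 : (m + e).choose m = (m + e).choose e := Nat.choose_symm_add
  have hc2 : (m + n + e).choose (m + n) = (m + n + e).choose e := Nat.choose_symm_add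
  rw [hidx1, hidx2, hc1, hc2]
  have hpos1 : (0:ℝ) < (m + e).choose e := by
    exact_mod_cast Nat.choose_pos (by omega)
  have hpos2 : (0:ℝ) < (m + n + e).choose e := by
    exact_mod_cast Nat.choose_pos (by omega)
  have hmn1 : (0:ℝ) < (m:ℝ) + n + 1 := by positivity
  constructor
  · rw [div_pow, div_le_div_iff₀ (by positivity) hpos2]
    have := choose_ratio_key m n e
    have : ((m + 1) ^ e * (m + n + e).choose e : ℝ)
        ≤ ((m + n + 1) ^ e * (m + e).choose e : ℝ) := by exact_mod_cast this
    push_cast at this ⊢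
    linarith
  · have hx : (0:ℝ) ≤ (n:ℝ) / ((m:ℝ) + n + 1) := by positivity
    have hx2 : -(2:ℝ) ≤ -((n:ℝ) / ((m:ℝ) + n + 1)) := by
      have : (n:ℝ) / ((m:ℝ) + n + 1) ≤ 1 := by
        rw [div_le_one hmn1]; linarith
      linarith
    have hb := one_add_mul_le_pow hx2 e
    have hrw : 1 + -((n:ℝ) / ((m:ℝ) + n + 1)) = ((m:ℝ) + 1) / ((m:ℝ) + n + 1) := by
      field_simp
      ring
    rw [hrw] at hb
    have hN2 : (N:ℝ) = 2 * m := by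
      have : N = 2 * m := (Nat.div_mul_cancel hN).symm ▸ by omega
      exact_mod_cast this
    have hstep : 1 - 2 * (d:ℝ) * n / N ≤ 1 + (e:ℝ) * -((n:ℝ) / ((m:ℝ) + n + 1)) := by
      rw [hN2]
      have hde : (e:ℝ) = (d:ℝ) - 1 := by
        have : (e:ℝ) + 1 = d := by exact_mod_cast hd'.symm
        linarith
      rw [hde]
      have hmR : (0:ℝ) < (m:ℝ) := by exact_mod_cast hmpos
      have key : ((d:ℝ) - 1) * (n:ℝ) * (2 * m) ≤ 2 * (d:ℝ) * n * ((m:ℝ) + n + 1) := by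
        have hd1 : (1:ℝ) ≤ d := by exact_mod_cast hd
        have hn1 : (1:ℝ) ≤ n := by exact_mod_cast hn
        nlinarith [mul_nonneg (mul_nonneg (le_of_lt (by positivity : (0:ℝ) < (d:ℝ))) (by positivity : (0:ℝ) ≤ (n:ℝ))) (by positivity : (0:ℝ) ≤ (n:ℝ)), mul_nonneg hmR.le (by positivity : (0:ℝ) ≤ (n:ℝ))]
      have h2m : (0:ℝ) < 2 * (m:ℝ) := by positivity
      have expand : (1 + ((d:ℝ) - 1) * -((n:ℝ) / ((m:ℝ) + n + 1))) - (1 - 2 * (d:ℝ) * n / (2 * (m:ℝ)))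
          = 2 * (d:ℝ) * n / (2 * (m:ℝ)) - ((d:ℝ) - 1) * ((n:ℝ) / ((m:ℝ) + n + 1)) := by ring
      have eq2 : ((d:ℝ) - 1) * ((n:ℝ) / ((m:ℝ) + n + 1)) = (((d:ℝ) - 1) * n) / ((m:ℝ) + n + 1) := by
        ring
      rw [← sub_nonneg, expand, sub_nonneg, eq2, div_le_div_iff₀ hmn1 h2m]
      linarith
    exact le_trans hstep hb
end

section
/- For pure states drawn via a Haar-random isometry U from M to B⊗R with ⟨ψ_i^w| the (unnormalized) conditional interior vectors defined by U_w|0⟩ = (1/√|R|^{1/2})Σ_i |ψ_i^w⟩_B |i⟩_R, the average squared overlap satisfies E_w |⟨ψ_i^w|ψ_j^w⟩|² = δ_{ij} + 2^{−S_BH} + O(2^{−(S_BH + k)}), where |B| = 2^{S_BH} and |R| = 2^k. Formally: for a Haar-random (2-design) isometry U: C → B⊗R and vectors v_i = |R|^{1/2} (I_B ⊗ ⟨i|_R) U|0⟩, one has E|⟨v_i, v_j⟩|² = (|B|δ_{ij} + 1)/|B| · (1 + O(1/(|B||R|))). -/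
open Matrix Kronecker
open scoped ComplexOrder

/-- The rank-one projector `|v⟩⟨v|`. -/
noncomputable def outer {ι : Type*} (v : ι → ℂ) : Matrix ι ι ℂ :=
  fun i j => v i * (starRingEnd ℂ) (v j)

/-- The swap unitary `τ(u⊗v) = v⊗u` on `H ⊗ H`, as a matrix. -/
noncomputable def swapM (ι : Type*) [DecidableEq ι] : Matrix (ι × ι) (ι × ι) ℂ :=
  fun x y => if x.1 = y.2 ∧ x.2 = y.1 then 1 else 0

/-!
Expanding `|⟨v_i, v_j⟩|² = |R|² Σ_{β,β'} u(β,j) ū(β,i) u(β',i) ū(β',j)` turns the average into a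
sum of fourth moments, which the 2-design identity evaluates entrywise: the identity contributes
`δ_{ij}` and the swap `δ_{ββ'}`, each divided by `D² + D` with `D = |B||R|`. Summing over `β, β'`
gives `|R|² (|B|² δ_{ij} + |B|) / (D² + D) = (|B| δ_{ij} + 1)/|B| · (1 - 1/(D + 1))`.
-/

open Finset ComplexConjugate

lemma kroneckerMap_outer_apply {ι : Type*} (v : ι → ℂ) (a b c d : ι) :
    (outer v ⊗ₖ outer v) (a, c) (b, d) = v a * conj (v b) * (v c * conj (v d)) := rfl

lemma one_add_swapM_apply {ι : Type*} [DecidableEq ι] (a b c d : ι) :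
    ((1 : Matrix (ι × ι) (ι × ι) ℂ) + swapM ι) (a, c) (b, d)
      = (if a = b ∧ c = d then 1 else 0) + (if a = d ∧ c = b then 1 else 0) := by
  simp [Matrix.one_apply, swapM, Prod.ext_iff]

lemma sq_norm_sum_conj_mul {κ : Type*} [Fintype κ] (x y : κ → ℂ) :
    (‖∑ β, conj (x β) * y β‖ : ℂ) ^ 2
      = ∑ β, ∑ β', y β * conj (x β) * (x β' * conj (y β')) := by
  rw [← Complex.mul_conj', map_sum, sum_mul_sum]
  simp only [map_mul, Complex.conj_conj, mul_comm (conj (x _)) (y _), mul_comm (conj (y _)) (x _)]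

lemma sq_norm_sum_conj_mul_ofReal_smul {κ : Type*} [Fintype κ] (s : ℝ) (x y : κ → ℂ) :
    ‖∑ β, conj ((s : ℂ) * x β) * ((s : ℂ) * y β)‖ ^ 2
      = s ^ 4 * ‖∑ β, conj (x β) * y β‖ ^ 2 := by
  have hfactor : ∑ β, conj ((s : ℂ) * x β) * ((s : ℂ) * y β)
      = ((s ^ 2 : ℝ) : ℂ) * ∑ β, conj (x β) * y β := by
    rw [mul_sum]
    refine sum_congr rfl fun β _ => ?_
    rw [map_mul, Complex.conj_ofReal]
    push_cast
    ring
  rw [hfactor, norm_mul, Complex.norm_real, Real.norm_of_nonneg (sq_nonneg s)]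
  ring

section TwoDesign

variable {W : Type*} [Fintype W]

lemma fourth_moment_of_twirl {ι : Type*} [DecidableEq ι] {u : W → ι → ℂ} {c : ℂ}
    (h : (Fintype.card W : ℂ)⁻¹ • ∑ w, outer (u w) ⊗ₖ outer (u w) = c • (1 + swapM ι))
    (a b a' b' : ι) :
    (Fintype.card W : ℂ)⁻¹ * ∑ w, u w a * conj (u w b) * (u w a' * conj (u w b'))
      = c * ((if a = b ∧ a' = b' then 1 else 0) + (if a = b' ∧ a' = b then 1 else 0)) := by
  simpa only [Matrix.smul_apply, Matrix.sum_apply, kroneckerMap_outer_apply, one_add_swapM_apply,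
    smul_eq_mul] using congrFun (congrFun h (a, a')) (b, b')

lemma average_sq_norm_partial_overlap_of_twirl {κ ρ : Type*} [Fintype κ] [DecidableEq κ]
    [DecidableEq ρ] {u : W → κ × ρ → ℂ} {c : ℝ}
    (h : (Fintype.card W : ℂ)⁻¹ • ∑ w, outer (u w) ⊗ₖ outer (u w) = (c : ℂ) • (1 + swapM (κ × ρ)))
    (i j : ρ) :
    (Fintype.card W : ℝ)⁻¹ * ∑ w, ‖∑ β, conj (u w (β, i)) * u w (β, j)‖ ^ 2
      = c * (Fintype.card κ ^ 2 * (if i = j then 1 else 0) + Fintype.card κ) := by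
  apply Complex.ofReal_injective
  push_cast
  simp only [sq_norm_sum_conj_mul]
  rw [sum_comm]
  simp only [sum_comm (s := (univ : Finset W)), mul_sum (s := (univ : Finset κ)),
    fourth_moment_of_twirl h, Prod.mk.injEq, and_true, true_and]
  simp only [eq_comm, and_self, ← mul_sum, sum_add_distrib, sum_ite_eq, sum_const,
    card_univ, mem_univ, if_true, nsmul_eq_mul]
  split_ifs <;> push_cast <;> ring

end TwoDesign

/-- for a 2-design family of random pure states `u_w = U_w|0⟩` on `B ⊗ R`
(i.e. `(1/|W|) Σ_w (u_w u_w*)^⊗2 = (I + τ)/(D² + D)` with `D = |B||R|`, the Haar average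
of two copies), define the unnormalised conditional interior vectors
`v_i^w = |R|^{1/2} (I_B ⊗ ⟨i|_R) u_w`.  Then the average squared overlap satisfies
`E_w |⟨v_i^w, v_j^w⟩|² = (|B| δ_{ij} + 1)/|B| · (1 + O(1/(|B||R|)))`. -/
theorem average_overlap_interior_vectors :
    ∃ C : ℝ, 0 < C ∧
      ∀ (bb rr : ℕ), 0 < bb → 0 < rr →
      ∀ (W : Type) (_ : Fintype W) (_ : Nonempty W)
        (u : W → (Fin bb × Fin rr) → ℂ),
        (∀ w, ∑ q, ‖u w q‖ ^ 2 = 1) →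
        (((Fintype.card W : ℂ))⁻¹ • ∑ w, (outer (u w)) ⊗ₖ (outer (u w))
          = (((bb : ℂ) * rr) ^ 2 + (bb : ℂ) * rr)⁻¹ •
              ((1 : Matrix ((Fin bb × Fin rr) × (Fin bb × Fin rr))
                  ((Fin bb × Fin rr) × (Fin bb × Fin rr)) ℂ) + swapM (Fin bb × Fin rr))) →
        ∀ i j : Fin rr, ∃ ε : ℝ, |ε| ≤ C / ((bb : ℝ) * rr) ∧
          ((Fintype.card W : ℝ))⁻¹ *
              ∑ w, ‖∑ β : Fin bb,
                (starRingEnd ℂ) ((Real.sqrt rr : ℂ) * u w (β, i)) *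
                  ((Real.sqrt rr : ℂ) * u w (β, j))‖ ^ 2
            = (((bb : ℝ) * (if i = j then 1 else 0) + 1) / (bb : ℝ)) * (1 + ε) := by
  refine ⟨1, one_pos, fun bb rr hbb hrr W _ _ u _ hdes i j => ⟨-(1 / ((bb : ℝ) * rr + 1)), ?_, ?_⟩⟩
  · have hbr : (0 : ℝ) < bb * rr := by positivity
    rw [abs_neg, abs_of_pos (by positivity), one_div_le_one_div (by positivity) hbr]
    linarith
  · have hdes_ofReal : (Fintype.card W : ℂ)⁻¹ • ∑ w, outer (u w) ⊗ₖ outer (u w)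
        = (((((bb : ℝ) * rr) ^ 2 + bb * rr)⁻¹ : ℝ) : ℂ) • (1 + swapM (Fin bb × Fin rr)) := by
      push_cast
      exact hdes
    have hsqrt : Real.sqrt rr ^ 4 = (rr : ℝ) ^ 2 := by
      rw [show 4 = 2 * 2 from rfl, pow_mul, Real.sq_sqrt (Nat.cast_nonneg rr)]
    simp only [sq_norm_sum_conj_mul_ofReal_smul, hsqrt, ← mul_sum, mul_left_comm _ ((rr : ℝ) ^ 2),
      average_sq_norm_partial_overlap_of_twirl hdes_ofReal, Fintype.card_fin]
    field_simp
    ring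
end

section
/- Uniform convergence of Carlson-type limits: let g_N(n) = Σ_w p_w^{(N)} Tr(ρ_{R|w}^n) for quantum-classical states on a fixed finite-dimensional system R. Each g_N is analytic on the half-plane Re(n) > 1, continuous on Re(n) ≥ 1, and satisfies |g_N(n)| ≤ 1 there. If the measures on states induced by (p^{(N)}, ρ_{·|w}) converge in distribution, then g_N converges uniformly on every compact subset of the half-plane Re(n) ≥ 1 to a function g continuous on Re(n) ≥ 1 and analytic on Re(n) > 1, with |g| ≤ 1. -/
open Matrix
open scoped ComplexOrder

/-- `Tr(A^z)` for complex `z`, via functional calculus on the support of a Hermitian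
matrix: the sum of `λ^z` over the nonzero eigenvalues `λ`. -/
noncomputable def cTrPow {m : Type*} [Fintype m] [DecidableEq m]
    (A : Matrix m m ℂ) (z : ℂ) : ℂ :=
  if h : A.IsHermitian then
    ∑ i, if h.eigenvalues i = 0 then 0 else ((h.eigenvalues i : ℂ)) ^ z
  else 0

/-!
For a density matrix with eigenvalues `λᵢ ∈ [0, 1]`, `Tr(ρ^z) = ∑ᵢ λᵢ^z` when `z ≠ 0`. On
`Re z ≥ 1` each `λ^z` has modulus at most `λ` and derivative of modulus
`λ^(Re z) |log λ| ≤ λ |log λ| ≤ 1`, so every `g_N` is bounded by `1` and `d`-Lipschitz there.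
For fixed `z`, `t ↦ t^z` is continuous on `[0, ∞)`, so `ρ ↦ Tr(ρ^z)` is a continuous function of
the state by the continuous functional calculus, and the hypothesis makes `g_N(z)` converge.
Pointwise convergence of equi-Lipschitz functions is uniform on compact sets (Arzelà–Ascoli); the
limit is Lipschitz, bounded by `1`, and holomorphic on `Re z > 1` as a locally uniform limit of
holomorphic functions.
-/

open Filter Topology
open scoped ComplexStarModule NNReal

section LipschitzLimits

variable {ι α β : Type*} [PseudoMetricSpace α] [PseudoMetricSpace β]
  {F : ι → α → β} {g : α → β} {l : Filter ι} {C : ℝ≥0}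

lemma LipschitzOnWith.finset_sum {E : Type*} [SeminormedAddCommGroup E] {s : Set α}
    {f : ι → α → E} {K : ι → ℝ≥0} (t : Finset ι) (hf : ∀ i ∈ t, LipschitzOnWith (K i) (f i) s) :
    LipschitzOnWith (∑ i ∈ t, K i) (fun x => ∑ i ∈ t, f i x) s := by
  induction t using Finset.cons_induction with
  | empty => simpa using (LipschitzWith.const (0 : E)).lipschitzOnWith
  | cons i t hi ih =>
    simp only [Finset.sum_cons]
    exact (hf i (Finset.mem_cons_self i t)).add
      (ih fun j hj => hf j (Finset.mem_cons_of_mem hj))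

lemma lipschitzOnWith_of_tendsto [l.NeBot] {s : Set α} (hF : ∀ i, LipschitzOnWith C (F i) s)
    (hg : ∀ x ∈ s, Tendsto (F · x) l (𝓝 (g x))) : LipschitzOnWith C g s := by
  simp only [lipschitzOnWith_iff_restrict] at hF ⊢
  exact (isClosed_setOfPred_lipschitzWith C).mem_of_tendsto
    (tendsto_pi_nhds.2 fun x => hg x x.2) (Eventually.of_forall hF)

lemma tendstoUniformlyOn_of_lipschitzOnWith {K : Set α} (hK : IsCompact K)
    (hF : ∀ i, LipschitzOnWith C (F i) K) (hg : ∀ x ∈ K, Tendsto (F · x) l (𝓝 (g x))) :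
    TendstoUniformlyOn F g l K := by
  have hFK : EquicontinuousOn F K :=
    (LipschitzOnWith.uniformEquicontinuousOn F C hF).equicontinuousOn
  have hunif := (EquicontinuousOn.tendsto_uniformOnFun_iff_pi' (𝔖 := {K}) (by simpa using hK)
    (by simpa using hFK) l g).2 (tendsto_pi_nhds.2 fun x => hg x (by simpa using x.2))
  exact UniformOnFun.tendsto_iff_tendstoUniformlyOn.1 hunif K rfl

end LipschitzLimits

section ConvexCombination

variable {ι : Type*} [Fintype ι] {p : ι → ℝ}

lemma norm_sum_ofReal_mul_le (hp : ∀ i, 0 ≤ p i) (hp1 : ∑ i, p i = 1) {a : ι → ℂ} {C : ℝ}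
    (ha : ∀ i, ‖a i‖ ≤ C) : ‖∑ i, (p i : ℂ) * a i‖ ≤ C :=
  calc ‖∑ i, (p i : ℂ) * a i‖ ≤ ∑ i, p i * C := by
        refine (norm_sum_le _ _).trans (Finset.sum_le_sum fun i _ => ?_)
        rw [norm_mul, Complex.norm_of_nonneg (hp i)]
        exact mul_le_mul_of_nonneg_left (ha i) (hp i)
    _ = C := by rw [← Finset.sum_mul, hp1, one_mul]

lemma LipschitzOnWith.sum_ofReal_mul {α : Type*} [PseudoMetricSpace α] {s : Set α}
    {K : ℝ≥0} (hp : ∀ i, 0 ≤ p i) (hp1 : ∑ i, p i = 1) {f : ι → α → ℂ}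
    (hf : ∀ i, LipschitzOnWith K (f i) s) :
    LipschitzOnWith K (fun x => ∑ i, (p i : ℂ) * f i x) s := by
  refine LipschitzOnWith.of_dist_le_mul fun x hx y hy => ?_
  simp only [dist_eq_norm, ← Finset.sum_sub_distrib, ← mul_sub]
  exact norm_sum_ofReal_mul_le hp hp1 fun i => by
    simpa only [dist_eq_norm] using (hf i).dist_le_mul x hx y hy

end ConvexCombination

section ComplexPowers

lemma Complex.ne_zero_of_one_le_re {z : ℂ} (hz : 1 ≤ z.re) : z ≠ 0 :=
  Complex.ne_zero_of_re_pos (zero_lt_one.trans_le hz)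

lemma norm_ofReal_cpow_le_self {x : ℝ} (hx0 : 0 ≤ x) (hx1 : x ≤ 1) {z : ℂ} (hz : 1 ≤ z.re) :
    ‖(x : ℂ) ^ z‖ ≤ x := by
  rw [Complex.norm_cpow_eq_rpow_re_of_nonneg hx0 (by linarith)]
  simpa using Real.rpow_le_rpow_of_exponent_ge' hx0 hx1 zero_le_one hz

lemma mul_abs_log_le_one {x : ℝ} (hx0 : 0 ≤ x) (hx1 : x ≤ 1) : x * |Real.log x| ≤ 1 := by
  rcases hx0.eq_or_lt with rfl | hx0
  · simp
  · simpa [abs_mul, abs_of_pos hx0, mul_comm] using (Real.abs_log_mul_self_lt x hx0 hx1).le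

/-- The derivative `x ^ z * log x` has norm at most `x * |log x| ≤ 1` on the half-plane. -/
lemma lipschitzOnWith_ofReal_cpow {x : ℝ} (hx0 : 0 ≤ x) (hx1 : x ≤ 1) :
    LipschitzOnWith 1 (fun z : ℂ => (x : ℂ) ^ z) {z | 1 ≤ z.re} := by
  refine (convex_halfSpace_re_ge 1).lipschitzOnWith_of_nnnorm_hasDerivWithin_le
    (fun z hz => (Complex.hasStrictDerivAt_const_cpow
      (.inr (Complex.ne_zero_of_one_le_re hz))).hasDerivAt.hasDerivWithinAt)
    fun z hz => ?_
  rw [← NNReal.coe_le_coe, coe_nnnorm, NNReal.coe_one, norm_mul,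
    ← Complex.ofReal_log hx0, Complex.norm_real, Real.norm_eq_abs]
  calc ‖(x : ℂ) ^ z‖ * |Real.log x| ≤ x * |Real.log x| := by
        gcongr; exact norm_ofReal_cpow_le_self hx0 hx1 hz
    _ ≤ 1 := mul_abs_log_le_one hx0 hx1

lemma continuous_ofReal_max_zero_cpow {z : ℂ} (hz : 0 < z.re) :
    Continuous fun t : ℝ => ((max t 0 : ℝ) : ℂ) ^ z :=
  continuous_iff_continuousAt.2 fun _ =>
    (Complex.continuousAt_cpow_const_of_re_pos (.inl (by simp)) hz).comp (by fun_prop)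

end ComplexPowers

namespace Matrix

variable {n : Type*} [Fintype n] [DecidableEq n]

lemma IsHermitian.trace_cfc_s15 {𝕜 : Type*} [RCLike 𝕜] {A : Matrix n n 𝕜} (hA : A.IsHermitian)
    (f : ℝ → ℝ) : (cfc f A).trace = ∑ i, (f (hA.eigenvalues i) : 𝕜) := by
  rw [hA.cfc_eq, IsHermitian.cfc, Unitary.conjStarAlgAut_apply, trace_mul_cycle,
    Unitary.coe_star_mul_self, one_mul, trace_diagonal]
  rfl

lemma continuous_re_trace_cfc_realPart {f : ℝ → ℝ} (hf : Continuous f) :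
    Continuous fun A : Matrix n n ℂ => (cfc f (ℜ A : Matrix n n ℂ)).trace.re := by
  -- The L² operator norm makes matrices a C⋆-algebra without changing their topology.
  open scoped Matrix.Norms.L2Operator in
  have : Continuous fun A : Matrix n n ℂ => cfc f (ℜ A : Matrix n n ℂ) :=
    Continuous.cfc_of_mem_nhdsSet (s := Set.univ) f (by simp)
      (by simp only [realPart_apply_coe]; fun_prop) (fun A => (ℜ A).2) hf.continuousOn
  fun_prop

lemma IsHermitian.sum_eigenvalues {A : Matrix n n ℂ} (hA : A.IsHermitian) :
    ∑ i, hA.eigenvalues i = A.trace.re := by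
  simpa using congrArg Complex.re hA.trace_eq_sum_eigenvalues.symm

lemma PosSemidef.eigenvalues_le_one {A : Matrix n n ℂ} (hA : A.PosSemidef) (ht : A.trace = 1)
    (i : n) : hA.1.eigenvalues i ≤ 1 := by
  have hsum : ∑ j, hA.1.eigenvalues j = 1 := by simp [hA.1.sum_eigenvalues, ht]
  exact hsum ▸ Finset.single_le_sum (fun j _ => hA.eigenvalues_nonneg j) (Finset.mem_univ i)

end Matrix

section TracePower

variable {n : Type*} [Fintype n] [DecidableEq n] {A : Matrix n n ℂ}

lemma cTrPow_eq_sum_cpow (hA : A.IsHermitian) {z : ℂ} (hz : z ≠ 0) :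
    cTrPow A z = ∑ i, (hA.eigenvalues i : ℂ) ^ z := by
  rw [cTrPow, dif_pos hA]
  refine Finset.sum_congr rfl fun i _ => ?_
  split_ifs with h
  · rw [h, Complex.ofReal_zero, Complex.zero_cpow hz]
  · rfl

lemma differentiableAt_cTrPow (hA : A.IsHermitian) {z : ℂ} (hz : z ≠ 0) :
    DifferentiableAt ℂ (cTrPow A) z := by
  have hfun : (fun w => ∑ i, (hA.eigenvalues i : ℂ) ^ w) =ᶠ[𝓝 z] cTrPow A :=
    eventually_ne_nhds hz |>.mono fun w hw => (cTrPow_eq_sum_cpow hA hw).symm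
  refine DifferentiableAt.congr_of_eventuallyEq ?_ hfun.symm
  fun_prop (disch := exact .inr hz)

lemma norm_cTrPow_le_one (hA : A.PosSemidef) (ht : A.trace = 1) {z : ℂ} (hz : 1 ≤ z.re) :
    ‖cTrPow A z‖ ≤ 1 := by
  rw [cTrPow_eq_sum_cpow hA.1 (Complex.ne_zero_of_one_le_re hz)]
  calc ‖∑ i, (hA.1.eigenvalues i : ℂ) ^ z‖ ≤ ∑ i, hA.1.eigenvalues i :=
        (norm_sum_le _ _).trans <| Finset.sum_le_sum fun i _ =>
          norm_ofReal_cpow_le_self (hA.eigenvalues_nonneg i) (hA.eigenvalues_le_one ht i) hz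
    _ = 1 := by simp [hA.1.sum_eigenvalues, ht]

lemma lipschitzOnWith_cTrPow (hA : A.PosSemidef) (ht : A.trace = 1) :
    LipschitzOnWith (Fintype.card n) (cTrPow A) {z | 1 ≤ z.re} := by
  have hsum := LipschitzOnWith.finset_sum Finset.univ fun i _ =>
    lipschitzOnWith_ofReal_cpow (hA.eigenvalues_nonneg i) (hA.eigenvalues_le_one ht i)
  intro z hz w hw
  rw [cTrPow_eq_sum_cpow hA.1 (Complex.ne_zero_of_one_le_re hz),
    cTrPow_eq_sum_cpow hA.1 (Complex.ne_zero_of_one_le_re hw)]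
  simpa using hsum hz hw

end TracePower

section Expectations

/-- Convergence in distribution of the measures `∑_w p N w • δ_{x N w}`, phrased through the
expectations of continuous functions (which are bounded on a compact set of states). -/
def HasConvergentExpectations {X : Type*} [TopologicalSpace X] {W : ℕ → Type*}
    [∀ N, Fintype (W N)] (p : (N : ℕ) → W N → ℝ) (x : (N : ℕ) → W N → X) : Prop :=
  ∀ f : X → ℝ, Continuous f → ∃ L, Tendsto (fun N => ∑ w, p N w * f (x N w)) atTop (𝓝 L)

variable {n : Type*} [Fintype n] [DecidableEq n] {W : ℕ → Type*} [∀ N, Fintype (W N)]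
  {p : (N : ℕ) → W N → ℝ} {ρ : (N : ℕ) → W N → Matrix n n ℂ}

/-- `∑ᵢ ψ(λᵢ)` is the trace of `ψ(ρ)`, a continuous function of `ρ` by the continuous
functional calculus (applied to the real and imaginary parts of `ψ`). -/
lemma HasConvergentExpectations.exists_tendsto_sum_eigenvalues
    (h : HasConvergentExpectations p ρ) (hρ : ∀ N w, (ρ N w).IsHermitian) {ψ : ℝ → ℂ}
    (hψ : Continuous ψ) :
    ∃ L, Tendsto (fun N => ∑ w, (p N w : ℂ) * ∑ i, ψ ((hρ N w).eigenvalues i)) atTop (𝓝 L) := by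
  have hreal : ∀ φ : ℝ → ℝ, Continuous φ →
      ∃ L, Tendsto (fun N => ∑ w, p N w * ∑ i, φ ((hρ N w).eigenvalues i)) atTop (𝓝 L) := by
    intro φ hφ
    refine (h _ (continuous_re_trace_cfc_realPart hφ)).imp fun L hL => hL.congr fun N => ?_
    refine Finset.sum_congr rfl fun w _ => ?_
    rw [(hρ N w).isSelfAdjoint.coe_realPart, (hρ N w).trace_cfc_s15]
    simp
  obtain ⟨a, ha⟩ := hreal _ (Complex.continuous_re.comp hψ)
  obtain ⟨b, hb⟩ := hreal _ (Complex.continuous_im.comp hψ)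
  refine ⟨a + b * Complex.I, ?_⟩
  convert ((Complex.continuous_ofReal.tendsto a).comp ha).add
    (((Complex.continuous_ofReal.tendsto b).comp hb).mul_const Complex.I) using 2 with N
  apply Complex.ext <;> simp [Complex.re_sum, Complex.im_sum]

lemma HasConvergentExpectations.exists_tendsto_sum_mul_cTrPow
    (h : HasConvergentExpectations p ρ) (hρ : ∀ N w, (ρ N w).PosSemidef) {z : ℂ}
    (hz : 0 < z.re) :
    ∃ L, Tendsto (fun N => ∑ w, (p N w : ℂ) * cTrPow (ρ N w) z) atTop (𝓝 L) := by
  obtain ⟨L, hL⟩ := h.exists_tendsto_sum_eigenvalues (fun N w => (hρ N w).1)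
    (continuous_ofReal_max_zero_cpow hz)
  refine ⟨L, hL.congr fun N => Finset.sum_congr rfl fun w _ => ?_⟩
  simp_rw [cTrPow_eq_sum_cpow (hρ N w).1 (Complex.ne_zero_of_re_pos hz),
    max_eq_left ((hρ N w).eigenvalues_nonneg _)]

end Expectations

/-- uniform convergence of Carlson-type limits: with
`g_N(z) = Σ_w p_w^{(N)} Tr(ρ_{R|w}^z)` for quantum-classical states on a fixed
finite-dimensional system `R`, each `g_N` is analytic on `Re z > 1`, continuous on
`Re z ≥ 1` and bounded by `1` there; and if the induced measures on states converge in
distribution (expectations of continuous functions of the state converge), then `g_N`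
converges uniformly on compact subsets of `{Re z ≥ 1}` to a limit `g` which is continuous
on `{Re z ≥ 1}`, analytic on `{Re z > 1}`, and bounded by `1`. -/
theorem carlson_uniform_convergence
    (d : ℕ) (W : ℕ → Type) [∀ N, Fintype (W N)]
    (p : (N : ℕ) → W N → ℝ) (ρ : (N : ℕ) → W N → Matrix (Fin d) (Fin d) ℂ)
    (hp : ∀ N w, 0 ≤ p N w) (hp1 : ∀ N, ∑ w, p N w = 1)
    (hρ : ∀ N w, (ρ N w).PosSemidef) (htr : ∀ N w, (ρ N w).trace = 1)
    (hconv : ∀ f : Matrix (Fin d) (Fin d) ℂ → ℝ, Continuous f →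
      ∃ L : ℝ, Filter.Tendsto (fun N => ∑ w, p N w * f (ρ N w)) Filter.atTop (nhds L)) :
    (∀ N, DifferentiableOn ℂ (fun z => ∑ w, (p N w : ℂ) * cTrPow (ρ N w) z) {z | 1 < z.re}
        ∧ ContinuousOn (fun z => ∑ w, (p N w : ℂ) * cTrPow (ρ N w) z) {z | 1 ≤ z.re}
        ∧ ∀ z : ℂ, 1 ≤ z.re → ‖∑ w, (p N w : ℂ) * cTrPow (ρ N w) z‖ ≤ 1)
      ∧ ∃ g : ℂ → ℂ,
          ContinuousOn g {z | 1 ≤ z.re}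
          ∧ DifferentiableOn ℂ g {z | 1 < z.re}
          ∧ (∀ z : ℂ, 1 ≤ z.re → ‖g z‖ ≤ 1)
          ∧ ∀ K : Set ℂ, K ⊆ {z | 1 ≤ z.re} → IsCompact K →
              TendstoUniformlyOn (fun N z => ∑ w, (p N w : ℂ) * cTrPow (ρ N w) z) g
                Filter.atTop K := by
  set F : ℕ → ℂ → ℂ := fun N z => ∑ w, (p N w : ℂ) * cTrPow (ρ N w) z
  have hopen : {z : ℂ | 1 < z.re} ⊆ {z | 1 ≤ z.re} := Set.ofPred_subset_ofPred.2 fun _ => le_of_lt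
  have hFlip : ∀ N, LipschitzOnWith d (F N) {z | 1 ≤ z.re} := fun N => by
    simpa using LipschitzOnWith.sum_ofReal_mul (hp N) (hp1 N) fun w =>
      lipschitzOnWith_cTrPow (hρ N w) (htr N w)
  have hFdiff : ∀ N, DifferentiableOn ℂ (F N) {z | 1 ≤ z.re} := fun N z hz =>
    (DifferentiableAt.fun_sum fun w _ => (differentiableAt_cTrPow (hρ N w).1
      (Complex.ne_zero_of_one_le_re hz)).const_mul _).differentiableWithinAt
  have hFle : ∀ N, ∀ z : ℂ, 1 ≤ z.re → ‖F N z‖ ≤ 1 := fun N z hz =>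
    norm_sum_ofReal_mul_le (hp N) (hp1 N) fun w => norm_cTrPow_le_one (hρ N w) (htr N w) hz
  set g : ℂ → ℂ := fun z => limUnder atTop (F · z)
  have hg : ∀ z ∈ {z : ℂ | 1 ≤ z.re}, Tendsto (F · z) atTop (𝓝 (g z)) := fun z hz =>
    tendsto_nhds_limUnder <|
      HasConvergentExpectations.exists_tendsto_sum_mul_cTrPow hconv hρ (zero_lt_one.trans_le hz)
  have hunif : ∀ K ⊆ {z : ℂ | 1 ≤ z.re}, IsCompact K → TendstoUniformlyOn F g atTop K :=
    fun K hK hKc => tendstoUniformlyOn_of_lipschitzOnWith hKc (fun N => (hFlip N).mono hK)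
      fun z hz => hg z (hK hz)
  have hUopen : IsOpen {z : ℂ | 1 < z.re} := isOpen_lt continuous_const Complex.continuous_re
  have hloc : TendstoLocallyUniformlyOn F g atTop {z : ℂ | 1 < z.re} :=
    (tendstoLocallyUniformlyOn_iff_forall_isCompact hUopen).2 fun K hK hKc =>
      hunif K (hK.trans hopen) hKc
  exact ⟨fun N => ⟨(hFdiff N).mono hopen, (hFdiff N).continuousOn, hFle N⟩, g,
    (lipschitzOnWith_of_tendsto hFlip hg).continuousOn,
    hloc.differentiableOn (Eventually.of_forall fun N => (hFdiff N).mono hopen) hUopen,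
    fun z hz => le_of_tendsto (hg z hz).norm (Eventually.of_forall fun N => hFle N z hz), hunif⟩
end

section
/- Continuity of Rényi entropy in the order near 1: for any quantum-classical state ρ_{AB} on finite-dimensional A (with |A| the dimension of A) there is a constant c such that for all n sufficiently close to 1 with n > 1, S(A|B)_ρ ≥ S_n(A|B)_ρ ≥ S(A|B)_ρ − c(n−1)(log|A|)², where S_n(A|B)_ρ = (1/(1−n)) log Σ_b p_b Tr(ρ_{A|b}^n). Consequently, lim_{n→1} S_n(A|B)_ρ = S(A|B)_ρ, with convergence uniform over all states on a fixed A. -/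
open Matrix
open scoped ComplexOrder

/-- Von Neumann entropy `S(A) = -Tr(A log A)`, via eigenvalues of a Hermitian matrix. -/
noncomputable def vN {m : Type*} [Fintype m] [DecidableEq m] (A : Matrix m m ℂ) : ℝ :=
  if h : A.IsHermitian then -∑ i, h.eigenvalues i * Real.log (h.eigenvalues i) else 0

/-!
Flatten the quantum-classical state to the classical distribution `q (k, i) = p k λ_{k,i}`
on pairs, where `λ_{k,·}` are the eigenvalues of `ρ_{A|k}`. Then
`Σ_k p_k Tr ρ_{A|k}^n = Σ q · exp((n-1) log λ)`, so Jensen's inequality for `exp` gives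
`S_n(A|B) ≤ S(A|B)`, while `exp y ≤ 1 + y + y²/2` for `y ≤ 0` together with `log t ≤ t - 1`
gives `S_n(A|B) ≥ S(A|B) - (n-1)/2 · Σ q (log λ)²`. The last sum is at most
`8 |A| (log |A|)²`, since `t (log t)² ≤ 2` on `[0, 1]` and `log |A| ≥ 1/2` once `|A| ≥ 2`.
-/

open Real Finset Filter Topology

namespace Real

lemma exp_neg_le_one_sub_add_sq_div_two {z : ℝ} (hz : 0 ≤ z) :
    exp (-z) ≤ 1 - z + z ^ 2 / 2 := by
  have hcubic : 1 + z + z ^ 2 / 2 + z ^ 3 / 6 ≤ exp z := by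
    simpa [sum_range_succ, Nat.factorial] using sum_le_exp_of_nonneg hz 4
  have hquad : 0 ≤ 1 - z + z ^ 2 / 2 := by nlinarith [sq_nonneg (z - 1)]
  rw [exp_neg, inv_le_iff_one_le_mul₀' (exp_pos z)]
  -- `(1 + z + z²/2 + z³/6) (1 - z + z²/2) = 1 + z³/6 + z⁴/12 + z⁵/12`
  nlinarith [mul_le_mul_of_nonneg_right hcubic hquad, pow_nonneg hz 3, pow_nonneg hz 4,
    pow_nonneg hz 5]

lemma mul_log_sq_le_two {x : ℝ} (h0 : 0 ≤ x) (h1 : x ≤ 1) : x * log x ^ 2 ≤ 2 := by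
  rcases h0.eq_or_lt with rfl | hx
  · simp
  have h := pow_div_factorial_le_exp (x := -log x) (neg_nonneg.mpr (log_nonpos h0 h1)) 2
  rw [exp_neg, exp_log hx, neg_sq] at h
  calc x * log x ^ 2 = 2 * (x * (log x ^ 2 / 2)) := by ring
    _ ≤ 2 * (x * x⁻¹) := by gcongr; simpa using h
    _ = 2 := by rw [mul_inv_cancel₀ hx.ne', mul_one]

lemma rpow_eq_mul_exp_sub_one_mul_log {x : ℝ} (hx : 0 < x) (n : ℝ) :
    x ^ n = x * exp ((n - 1) * log x) := by
  rw [rpow_def_of_pos hx, show log x * n = log x + (n - 1) * log x by ring, exp_add, exp_log hx]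

lemma rpow_le_add_mul_log_add_mul_log_sq {x n : ℝ} (h0 : 0 ≤ x) (h1 : x ≤ 1) (hn : 1 ≤ n) :
    x ^ n ≤ x + (n - 1) * (x * log x) + (n - 1) ^ 2 / 2 * (x * log x ^ 2) := by
  rcases h0.eq_or_lt with rfl | hx
  · simp [zero_rpow (by linarith : n ≠ 0)]
  have hy : 0 ≤ -((n - 1) * log x) :=
    neg_nonneg.mpr (mul_nonpos_of_nonneg_of_nonpos (by linarith) (log_nonpos h0 h1))
  have htaylor := exp_neg_le_one_sub_add_sq_div_two hy
  rw [neg_neg] at htaylor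
  calc x ^ n = x * exp ((n - 1) * log x) := rpow_eq_mul_exp_sub_one_mul_log hx n
    _ ≤ x * (1 - -((n - 1) * log x) + (-((n - 1) * log x)) ^ 2 / 2) := by gcongr
    _ = _ := by ring

end Real

section WeightedPowerSums

variable {ι : Type*} [Fintype ι] {p x : ι → ℝ}

lemma exp_mul_sum_mul_log_le_sum_rpow (hp : ∀ i, 0 ≤ p i) (hx : ∀ i, 0 ≤ x i)
    (hpx : ∑ i, p i * x i = 1) {n : ℝ} (hn : n ≠ 0) :
    exp ((n - 1) * ∑ i, p i * (x i * log (x i))) ≤ ∑ i, p i * x i ^ n := by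
  have hjensen := convexOn_exp.map_sum_le (t := univ) (w := fun i => p i * x i)
    (p := fun i => (n - 1) * log (x i)) (fun i _ => mul_nonneg (hp i) (hx i)) hpx
    (fun i _ => Set.mem_univ _)
  calc exp ((n - 1) * ∑ i, p i * (x i * log (x i)))
      = exp (∑ i, (p i * x i) • ((n - 1) * log (x i))) := by
        rw [mul_sum]
        exact congrArg exp (sum_congr rfl fun i _ => by rw [smul_eq_mul]; ring)
    _ ≤ ∑ i, (p i * x i) • exp ((n - 1) * log (x i)) := hjensen
    _ = ∑ i, p i * x i ^ n := by
        refine sum_congr rfl fun i _ => ?_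
        rcases (hx i).eq_or_lt with h0 | hpos
        · simp [← h0, zero_rpow hn]
        · rw [smul_eq_mul, rpow_eq_mul_exp_sub_one_mul_log hpos, mul_assoc]

lemma sum_rpow_le_one_add (hp : ∀ i, 0 ≤ p i) (hx0 : ∀ i, 0 ≤ x i) (hx1 : ∀ i, x i ≤ 1)
    (hpx : ∑ i, p i * x i = 1) {n : ℝ} (hn : 1 ≤ n) :
    ∑ i, p i * x i ^ n ≤ 1 + (n - 1) * ∑ i, p i * (x i * log (x i))
      + (n - 1) ^ 2 / 2 * ∑ i, p i * (x i * log (x i) ^ 2) := by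
  calc ∑ i, p i * x i ^ n
      ≤ ∑ i, p i * (x i + (n - 1) * (x i * log (x i))
          + (n - 1) ^ 2 / 2 * (x i * log (x i) ^ 2)) :=
        sum_le_sum fun i _ => mul_le_mul_of_nonneg_left
          (rpow_le_add_mul_log_add_mul_log_sq (hx0 i) (hx1 i) hn) (hp i)
    _ = _ := by simp only [mul_add, sum_add_distrib, hpx, mul_sum, mul_left_comm (p _)]

lemma weighted_renyi_bounds (hp : ∀ i, 0 ≤ p i) (hx0 : ∀ i, 0 ≤ x i)
    (hx1 : ∀ i, x i ≤ 1) (hpx : ∑ i, p i * x i = 1) {n : ℝ} (hn : 1 < n) :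
    1 / (1 - n) * log (∑ i, p i * x i ^ n) ≤ -∑ i, p i * (x i * log (x i)) ∧
      -∑ i, p i * (x i * log (x i)) - (n - 1) / 2 * ∑ i, p i * (x i * log (x i) ^ 2)
        ≤ 1 / (1 - n) * log (∑ i, p i * x i ^ n) := by
  set H := -∑ i, p i * (x i * log (x i))
  set V := ∑ i, p i * (x i * log (x i) ^ 2)
  set F := ∑ i, p i * x i ^ n
  have hjensen : exp ((1 - n) * H) ≤ F := by
    convert exp_mul_sum_mul_log_le_sum_rpow hp hx0 hpx (by linarith : n ≠ 0) using 2
    ring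
  have hF : 0 < F := (exp_pos _).trans_le hjensen
  have hlower : (1 - n) * H ≤ log F := (le_log_iff_exp_le hF).mpr hjensen
  have hupper : log F ≤ (1 - n) * (H - (n - 1) / 2 * V) := by
    have htaylor := sum_rpow_le_one_add hp hx0 hx1 hpx hn.le
    calc log F ≤ F - 1 := log_le_sub_one_of_pos hF
      _ ≤ (n - 1) * -H + (n - 1) ^ 2 / 2 * V := by simp only [H, neg_neg]; linarith
      _ = _ := by ring
  have hneg : 1 - n < 0 := by linarith
  rw [one_div_mul_eq_div, div_le_iff_of_neg hneg, le_div_iff_of_neg hneg, mul_comm H,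
    mul_comm _ (1 - n)]
  exact ⟨hlower, hupper⟩

end WeightedPowerSums

lemma sum_mul_log_sq_le {κ : Type*} [Fintype κ] {x : κ → ℝ} (hx0 : ∀ i, 0 ≤ x i)
    (hx1 : ∑ i, x i = 1) :
    ∑ i, x i * log (x i) ^ 2 ≤ 8 * Fintype.card κ * log (Fintype.card κ) ^ 2 := by
  have hle : ∀ i, x i ≤ 1 := fun i => hx1 ▸ single_le_sum (fun j _ => hx0 j) (mem_univ i)
  rcases le_or_gt (Fintype.card κ) 1 with hcard | hcard
  · have : Subsingleton κ := Fintype.card_le_one_iff_subsingleton.mp hcard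
    have hone : ∀ i, x i = 1 := fun i => by rwa [Fintype.sum_subsingleton _ i] at hx1
    rw [show ∑ i, x i * log (x i) ^ 2 = 0 by simp [hone]]
    positivity
  · have hlog : 1 / 2 ≤ log (Fintype.card κ) := by
      have := log_le_log two_pos (show (2 : ℝ) ≤ Fintype.card κ by exact_mod_cast hcard)
      linarith [log_two_gt_d9]
    calc ∑ i, x i * log (x i) ^ 2 ≤ ∑ _i : κ, (2 : ℝ) :=
          sum_le_sum fun i _ => mul_log_sq_le_two (hx0 i) (hle i)
      _ = 2 * Fintype.card κ := by simp [mul_comm]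
      _ ≤ 8 * Fintype.card κ * log (Fintype.card κ) ^ 2 := by
        have hsq : 1 / 4 ≤ log (Fintype.card κ) ^ 2 := by nlinarith
        nlinarith [mul_le_mul_of_nonneg_left hsq (Nat.cast_nonneg (α := ℝ) (Fintype.card κ))]

lemma Matrix.PosSemidef.sum_eigenvalues_eq_one {κ : Type*} [Fintype κ] [DecidableEq κ]
    {ρ : Matrix κ κ ℂ} (hρ : ρ.PosSemidef) (htr : ρ.trace = 1) :
    ∑ i, hρ.isHermitian.eigenvalues i = 1 := by
  have h := hρ.isHermitian.trace_eq_sum_eigenvalues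
  rw [htr] at h
  simpa using congrArg Complex.re h.symm

lemma quantum_classical_renyi_bounds {ι κ : Type*} [Fintype ι] [Fintype κ] [DecidableEq κ]
    {p : ι → ℝ} (hp : ∀ k, 0 ≤ p k) (hp1 : ∑ k, p k = 1) {ρ : ι → Matrix κ κ ℂ}
    (hρ : ∀ k, (ρ k).PosSemidef) (htr : ∀ k, (ρ k).trace = 1) {n : ℝ} (hn : 1 < n) :
    1 / (1 - n) * log (∑ k, p k * trRpow (ρ k) n) ≤ ∑ k, p k * vN (ρ k) ∧
      ∑ k, p k * vN (ρ k) - 4 * Fintype.card κ * (n - 1) * log (Fintype.card κ) ^ 2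
        ≤ 1 / (1 - n) * log (∑ k, p k * trRpow (ρ k) n) := by
  set e : ι → κ → ℝ := fun k => (hρ k).isHermitian.eigenvalues
  have he0 : ∀ k i, 0 ≤ e k i := fun k i => (hρ k).eigenvalues_nonneg i
  have he1 : ∀ k, ∑ i, e k i = 1 := fun k => (hρ k).sum_eigenvalues_eq_one (htr k)
  have he_le_one : ∀ k i, e k i ≤ 1 := fun k i =>
    he1 k ▸ single_le_sum (fun j _ => he0 k j) (mem_univ i)
  have hflat : ∀ g : ℝ → ℝ,
      ∑ k, p k * ∑ i, g (e k i) = ∑ j : ι × κ, p j.1 * g (e j.1 j.2) := fun g => by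
    simp only [Fintype.sum_prod_type, mul_sum]
  have hvN :
      ∑ k, p k * vN (ρ k) = -∑ j : ι × κ, p j.1 * (e j.1 j.2 * log (e j.1 j.2)) := by
    rw [← hflat fun t => t * log t, ← sum_neg_distrib]
    exact sum_congr rfl fun k _ => by rw [vN, dif_pos (hρ k).isHermitian, mul_neg]
  have htrRpow : ∑ k, p k * trRpow (ρ k) n = ∑ j : ι × κ, p j.1 * e j.1 j.2 ^ n := by
    rw [← hflat fun t => t ^ n]
    exact sum_congr rfl fun k _ => by rw [trRpow, dif_pos (hρ k).isHermitian]
  have hnorm : ∑ j : ι × κ, p j.1 * e j.1 j.2 = 1 := by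
    rw [← hflat fun t => t]
    simp [he1, hp1]
  have hvar : ∑ j : ι × κ, p j.1 * (e j.1 j.2 * log (e j.1 j.2) ^ 2)
      ≤ 8 * Fintype.card κ * log (Fintype.card κ) ^ 2 := by
    rw [← hflat fun t => t * log t ^ 2]
    calc _ ≤ ∑ k, p k * (8 * Fintype.card κ * log (Fintype.card κ) ^ 2) :=
          sum_le_sum fun k _ =>
            mul_le_mul_of_nonneg_left (sum_mul_log_sq_le (he0 k) (he1 k)) (hp k)
      _ = _ := by rw [← sum_mul, hp1, one_mul]
  obtain ⟨hupper, hlower⟩ := weighted_renyi_bounds (p := fun j : ι × κ => p j.1)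
    (x := fun j => e j.1 j.2) (fun j => hp j.1) (fun j => he0 j.1 j.2)
    (fun j => he_le_one j.1 j.2) hnorm hn
  rw [hvN, htrRpow]
  refine ⟨hupper, le_trans ?_ hlower⟩
  have := mul_le_mul_of_nonneg_left hvar (by linarith : (0 : ℝ) ≤ (n - 1) / 2)
  linarith

lemma tendsto_nhdsGT_of_sub_mul_le_of_le {f : ℝ → ℝ} {x₀ L C : ℝ}
    (h : ∀ x, x₀ < x → L - C * (x - x₀) ≤ f x ∧ f x ≤ L) :
    Tendsto f (𝓝[>] x₀) (𝓝 L) := by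
  have hlower : Tendsto (fun x => L - C * (x - x₀)) (𝓝[>] x₀) (𝓝 L) := by
    refine tendsto_nhdsWithin_of_tendsto_nhds ?_
    have hcont : Continuous fun x => L - C * (x - x₀) := by fun_prop
    simpa using hcont.tendsto x₀
  exact tendsto_of_tendsto_of_tendsto_of_le_of_le' hlower tendsto_const_nhds
    (eventually_nhdsWithin_of_forall fun x hx => (h x hx).1)
    (eventually_nhdsWithin_of_forall fun x hx => (h x hx).2)

theorem renyi_continuity_near_one_general (a b : ℕ) :
    ∃ c : ℝ, 0 ≤ c ∧ ∃ δ : ℝ, 0 < δ ∧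
      ∀ (p : Fin b → ℝ), (∀ k, 0 ≤ p k) → (∑ k, p k) = 1 →
      ∀ (ρ : Fin b → Matrix (Fin a) (Fin a) ℂ),
        (∀ k, (ρ k).PosSemidef) → (∀ k, (ρ k).trace = 1) →
        (∀ n : ℝ, 1 < n → n < 1 + δ →
            (1 / (1 - n)) * Real.log (∑ k, p k * trRpow (ρ k) n) ≤ ∑ k, p k * vN (ρ k)
          ∧ (∑ k, p k * vN (ρ k)) - c * (n - 1) * (Real.log a) ^ 2
              ≤ (1 / (1 - n)) * Real.log (∑ k, p k * trRpow (ρ k) n))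
        ∧ Filter.Tendsto
            (fun n : ℝ => (1 / (1 - n)) * Real.log (∑ k, p k * trRpow (ρ k) n))
            (nhdsWithin 1 (Set.Ioi 1)) (nhds (∑ k, p k * vN (ρ k))) := by
  refine ⟨4 * a, by positivity, 1, one_pos, fun p hp hp1 ρ hρ htr => ?_⟩
  have hbounds := fun (n : ℝ) (hn : 1 < n) => by
    simpa only [Fintype.card_fin] using quantum_classical_renyi_bounds hp hp1 hρ htr hn
  refine ⟨fun n hn _ => hbounds n hn,
    tendsto_nhdsGT_of_sub_mul_le_of_le (C := 4 * a * log a ^ 2) fun n hn => ?_⟩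
  obtain ⟨hupper, hlower⟩ := hbounds n hn
  exact ⟨by linarith, hupper⟩

/-- continuity of the Rényi entropy in the order near 1: for a fixed system
`A` of dimension `a ≥ 1` (and classical system `B` of size `b`), there are constants
`c ≥ 0` and `δ > 0` such that for every quantum-classical state
`ρ_{AB} = Σ_b p_b ρ_{A|b} ⊗ |b⟩⟨b|` and every `n` with `1 < n < 1 + δ`,
`S(A|B) ≥ S_n(A|B) ≥ S(A|B) − c(n−1)(log|A|)²`, where
`S_n(A|B) = (1/(1−n)) log Σ_b p_b Tr(ρ_{A|b}^n)` and `S(A|B) = Σ_b p_b S(ρ_{A|b})`;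
consequently `S_n(A|B) → S(A|B)` as `n → 1⁺`, uniformly over all states on the fixed `A`. -/
theorem renyi_continuity_near_one (a b : ℕ) (ha : 0 < a) :
    ∃ c : ℝ, 0 ≤ c ∧ ∃ δ : ℝ, 0 < δ ∧
      ∀ (p : Fin b → ℝ), (∀ k, 0 ≤ p k) → (∑ k, p k) = 1 →
      ∀ (ρ : Fin b → Matrix (Fin a) (Fin a) ℂ),
        (∀ k, (ρ k).PosSemidef) → (∀ k, (ρ k).trace = 1) →
        (∀ n : ℝ, 1 < n → n < 1 + δ →
            (1 / (1 - n)) * Real.log (∑ k, p k * trRpow (ρ k) n) ≤ ∑ k, p k * vN (ρ k)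
          ∧ (∑ k, p k * vN (ρ k)) - c * (n - 1) * (Real.log a) ^ 2
              ≤ (1 / (1 - n)) * Real.log (∑ k, p k * trRpow (ρ k) n))
        ∧ Filter.Tendsto
            (fun n : ℝ => (1 / (1 - n)) * Real.log (∑ k, p k * trRpow (ρ k) n))
            (nhdsWithin 1 (Set.Ioi 1)) (nhds (∑ k, p k * vN (ρ k))) :=
  renyi_continuity_near_one_general a b
end
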